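/- arXiv:2512.18761 — 8 statements merged into one kernel-verified Lean document; each statement's English description precedes it below -/
import Mathlib

section
/- Let Δ > 0, D_y > 0 and A ∈ ℝ with 0 ≤ A ≤ min(D_y²/4, Δ²). Then P_l(Δ, A) = 1 − πA/(2 D_y Δ); equivalently, the two-dimensional Lebesgue measure of {(ε, y) ∈ [0, Δ] × [−D_y/2, D_y/2] : y² ≥ A − ε²} equals Δ·D_y − πA/2. -/
open MeasureTheory Real Set intervalIntegral

/-- The conditional outage probability `P_l(Δ, A)`: the normalized area of the set of
points `(ε, y)` in the rectangle `[0, Δ] × [−D_y/2, D_y/2]` with `y² ≥ A − ε²`. -/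
noncomputable def Pl (Dy Δ A : ℝ) : ℝ :=
  (volume {p : ℝ × ℝ | p.1 ∈ Icc 0 Δ ∧ p.2 ∈ Icc (-(Dy / 2)) (Dy / 2) ∧
    A - p.1 ^ 2 ≤ p.2 ^ 2}).toReal / (Δ * Dy)

lemma integral_sqrt_one_sub_sq_half : ∫ x in (0:ℝ)..1, √(1 - x ^ 2) = π / 4 := by
  have heven : ∫ x in (-1:ℝ)..0, √(1 - x ^ 2) = ∫ x in (0:ℝ)..1, √(1 - x ^ 2) := by
    have h := intervalIntegral.integral_comp_neg (a := (0:ℝ)) (b := 1)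
      (f := fun x => √(1 - x ^ 2))
    simp only [neg_zero] at h
    rw [← h]
    apply intervalIntegral.integral_congr
    intro x _
    simp [neg_sq]
  have hsplit := intervalIntegral.integral_add_adjacent_intervals
    (a := (-1:ℝ)) (b := 0) (c := 1)
    (f := fun x => √(1 - x ^ 2)) (μ := volume) ?_ ?_
  · have h1 := integral_sqrt_one_sub_sq
    rw [← hsplit, heven] at h1
    linarith
  · exact (Continuous.intervalIntegrable (by continuity) _ _)
  · exact (Continuous.intervalIntegrable (by continuity) _ _)

lemma integral_sqrt_sq_sub_sq (r : ℝ) (hr : 0 ≤ r) :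
    ∫ x in (0:ℝ)..r, √(r ^ 2 - x ^ 2) = π * r ^ 2 / 4 := by
  rcases hr.eq_or_lt with h | h
  · simp [← h]
  · have h1 : ∀ x : ℝ, √(r ^ 2 - x ^ 2) = r * √(1 - (x / r) ^ 2) := by
      intro x
      rw [← Real.sqrt_sq h.le, ← Real.sqrt_mul (by positivity)]
      congr 1
      field_simp
      rw [Real.sq_sqrt (sq_nonneg r)]
    simp_rw [h1]
    rw [intervalIntegral.integral_const_mul]
    have h2 := intervalIntegral.integral_comp_div (a := (0:ℝ)) (b := r)
      (c := r) (f := fun x => √(1 - x ^ 2)) h.ne'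
    rw [h2]
    simp only [zero_div, div_self h.ne', smul_eq_mul]
    rw [integral_sqrt_one_sub_sq_half]
    ring

theorem Pl_eq_of_le_min (Δ Dy A : ℝ) (hΔ : 0 < Δ) (hDy : 0 < Dy)
    (hA0 : 0 ≤ A) (hA1 : A ≤ min (Dy ^ 2 / 4) (Δ ^ 2)) :
    Pl Dy Δ A = 1 - π * A / (2 * Dy * Δ) ∧
    volume {p : ℝ × ℝ | p.1 ∈ Icc 0 Δ ∧ p.2 ∈ Icc (-(Dy / 2)) (Dy / 2) ∧
        A - p.1 ^ 2 ≤ p.2 ^ 2}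
      = ENNReal.ofReal (Δ * Dy - π * A / 2) := by
  set r : ℝ := √A with hr_def
  have hr0 : 0 ≤ r := Real.sqrt_nonneg A
  have hrsq : r ^ 2 = A := Real.sq_sqrt hA0
  have hrΔ : r ≤ Δ := by
    have : A ≤ Δ ^ 2 := le_trans hA1 (min_le_right _ _)
    calc r ≤ √(Δ ^ 2) := Real.sqrt_le_sqrt this
    _ = Δ := by rw [Real.sqrt_sq hΔ.le]
  have hrDy : r ≤ Dy / 2 := by
    have h1 : A ≤ (Dy / 2) ^ 2 := by
      have := le_trans hA1 (min_le_left _ _); nlinarith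
    calc r ≤ √((Dy / 2) ^ 2) := Real.sqrt_le_sqrt h1
    _ = Dy / 2 := by rw [Real.sqrt_sq (by positivity)]
  set g : ℝ → ℝ := fun x => √(A - x ^ 2) with hg_def
  have hgc : Continuous g := by
    exact Real.continuous_sqrt.comp (by continuity)
  set S : Set (ℝ × ℝ) := regionBetween (fun x => -g x) g (Ico 0 r) with hS_def
  set R : Set (ℝ × ℝ) := Icc (0:ℝ) Δ ×ˢ Icc (-(Dy / 2)) (Dy / 2) with hR_def
  set T : Set (ℝ × ℝ) := {p : ℝ × ℝ | p.1 ∈ Icc 0 Δ ∧ p.2 ∈ Icc (-(Dy / 2)) (Dy / 2) ∧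
      A - p.1 ^ 2 ≤ p.2 ^ 2} with hT_def
  -- S is the complement of T in R
  have hSsub : S ⊆ R := by
    rintro ⟨x, y⟩ ⟨hx, hy⟩
    simp only [mem_Ico] at hx
    simp only [mem_Ioo] at hy
    have hgx : g x ≤ r := by
      simp only [hg_def, hr_def]
      apply Real.sqrt_le_sqrt; nlinarith
    constructor
    · exact ⟨hx.1, le_trans hx.2.le hrΔ⟩
    · constructor
      · have : -(Dy / 2) ≤ -g x := by simp; linarith
        exact le_trans this hy.1.le
      · exact le_trans hy.2.le (le_trans hgx hrDy)
  have hTRS : T = R \ S := by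
    ext ⟨x, y⟩
    simp only [hT_def, hR_def, hS_def, mem_setOf_eq, mem_diff, mem_prod, regionBetween,
      mem_Ico, mem_Ioo]
    constructor
    · rintro ⟨hx, hy, hle⟩
      refine ⟨⟨hx, hy⟩, ?_⟩
      rintro ⟨⟨hx0, hxr⟩, hy1, hy2⟩
      have hxA : x ^ 2 < A := by
        have := Real.sq_sqrt hA0
        nlinarith [Real.sqrt_nonneg A]
      have hgx0 : 0 < g x := Real.sqrt_pos.mpr (by linarith)
      have : y ^ 2 < (g x) ^ 2 := sq_lt_sq' hy1 hy2
      rw [Real.sq_sqrt (by linarith : (0:ℝ) ≤ A - x ^ 2)] at this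
      linarith
    · rintro ⟨⟨hx, hy⟩, hnot⟩
      refine ⟨hx, hy, ?_⟩
      by_contra hlt
      push_neg at hlt
      apply hnot
      have hxA : x ^ 2 < A := by nlinarith [sq_nonneg y]
      have hxr : x < r := by
        rw [hr_def]
        have : x = √(x ^ 2) := (Real.sqrt_sq hx.1).symm
        rw [this]
        exact Real.sqrt_lt_sqrt (sq_nonneg x) hxA
      have hyg : |y| < g x := by
        rw [hg_def]
        have : |y| = √(y ^ 2) := (Real.sqrt_sq_eq_abs y).symm
        rw [this]
        exact Real.sqrt_lt_sqrt (sq_nonneg y) (by linarith)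
      rw [abs_lt] at hyg
      exact ⟨⟨hx.1, hxr⟩, by linarith, hyg.2⟩
  -- volume of S
  have hvolS : volume S = ENNReal.ofReal (π * A / 2) := by
    rw [hS_def, Measure.volume_eq_prod ℝ ℝ]
    rw [volume_regionBetween_eq_integral (f := fun x => -g x)
      ((hgc.neg.integrableOn_Icc (a := 0) (b := r)).mono_set Ico_subset_Icc_self)
      ((hgc.integrableOn_Icc (a := 0) (b := r)).mono_set Ico_subset_Icc_self)
      measurableSet_Ico
      (fun x _ => neg_le_self (Real.sqrt_nonneg _))]
    congr 1
    have : ∫ y in Ico (0:ℝ) r, (g - fun x => -g x) y = ∫ y in (0:ℝ)..r, 2 * g y := by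
      rw [MeasureTheory.integral_Ico_eq_integral_Ioo,
        intervalIntegral.integral_of_le hr0, MeasureTheory.integral_Ioc_eq_integral_Ioo]
      apply MeasureTheory.setIntegral_congr_fun measurableSet_Ioo
      intro x _
      simp only [Pi.sub_apply]
      ring
    rw [this, intervalIntegral.integral_const_mul]
    have hkey : ∫ y in (0:ℝ)..r, g y = π * A / 4 := by
      have := integral_sqrt_sq_sub_sq r hr0
      rw [hrsq] at this
      simpa [hg_def] using this
    rw [hkey]; ring_nf
  -- volume of R
  have hvolR : volume R = ENNReal.ofReal (Δ * Dy) := by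
    rw [hR_def, Measure.volume_eq_prod ℝ ℝ, Measure.prod_prod, Real.volume_Icc,
      Real.volume_Icc]
    rw [← ENNReal.ofReal_mul (by linarith)]
    congr 1
    ring
  have hSmeas : MeasurableSet S := by
    exact measurableSet_regionBetween (hgc.neg.measurable) hgc.measurable measurableSet_Ico
  have hπA : π * A / 2 ≤ Δ * Dy := by
    have hA_le : A ≤ Δ * (Dy / 2) := by
      calc A = r * r := by nlinarith
      _ ≤ Δ * (Dy / 2) := mul_le_mul hrΔ hrDy hr0 hΔ.le
    nlinarith [Real.pi_le_four]
  have hvolT : volume T = ENNReal.ofReal (Δ * Dy - π * A / 2) := by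
    rw [hTRS, measure_diff hSsub hSmeas.nullMeasurableSet
      (by rw [hvolS]; exact ENNReal.ofReal_ne_top), hvolS, hvolR]
    rw [← ENNReal.ofReal_sub _ (by positivity)]
  refine ⟨?_, hvolT⟩
  rw [Pl]
  rw [show {p : ℝ × ℝ | p.1 ∈ Icc 0 Δ ∧ p.2 ∈ Icc (-(Dy / 2)) (Dy / 2) ∧
      A - p.1 ^ 2 ≤ p.2 ^ 2} = T from rfl, hvolT,
    ENNReal.toReal_ofReal (by linarith)]
  field_simp
end

section
/- Let Δ > 0, D_y > 0 and A ∈ ℝ with Δ² ≤ A ≤ D_y²/4. Then P_l(Δ, A) = 1 − (A/(D_y Δ))·arcsin(Δ/√A) − √(A − Δ²)/D_y; equivalently, the two-dimensional Lebesgue measure of {(ε, y) ∈ [0, Δ] × [−D_y/2, D_y/2] : y² ≥ A − ε²} equals Δ·D_y − A·arcsin(Δ/√A) − Δ·√(A − Δ²). -/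
open MeasureTheory Real Set

lemma cont_sqrtA (A : ℝ) : Continuous fun x : ℝ => Real.sqrt (A - x ^ 2) :=
  Real.continuous_sqrt.comp (continuous_const.sub (continuous_pow 2))

lemma hasDeriv_aux {A x : ℝ} (hA : 0 < A) (hx : x ^ 2 < A) :
    HasDerivAt (fun x => (x * Real.sqrt (A - x ^ 2) + A * Real.arcsin (x / Real.sqrt A)) / 2)
      (Real.sqrt (A - x ^ 2)) x := by
  have ht : (0:ℝ) < Real.sqrt A := Real.sqrt_pos.2 hA
  have hs : (0:ℝ) < Real.sqrt (A - x ^ 2) := Real.sqrt_pos.2 (by linarith)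
  have habs : |x / Real.sqrt A| < 1 := by
    rw [abs_div, abs_of_pos ht, div_lt_one ht]
    calc |x| = Real.sqrt (x ^ 2) := (Real.sqrt_sq_eq_abs x).symm
    _ < Real.sqrt A := Real.sqrt_lt_sqrt (sq_nonneg x) hx
  have h1 : HasDerivAt (fun x : ℝ => A - x ^ 2) (-(2 * x)) x := by
    simpa using (hasDerivAt_pow 2 x).const_sub A
  have h2 : HasDerivAt (fun x : ℝ => Real.sqrt (A - x ^ 2))
      (-(2 * x) / (2 * Real.sqrt (A - x ^ 2))) x := h1.sqrt (by nlinarith)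
  have h3 : HasDerivAt (fun x : ℝ => x * Real.sqrt (A - x ^ 2))
      (1 * Real.sqrt (A - x ^ 2) + x * (-(2 * x) / (2 * Real.sqrt (A - x ^ 2)))) x :=
    (hasDerivAt_id x).mul h2
  have h4 : HasDerivAt (fun x : ℝ => Real.arcsin (x / Real.sqrt A))
      (1 / Real.sqrt (1 - (x / Real.sqrt A) ^ 2) * (1 / Real.sqrt A)) x := by
    have := (Real.hasDerivAt_arcsin (by simpa using (abs_lt.1 habs).1.ne')
      (by simpa using (abs_lt.1 habs).2.ne)).comp x
      ((hasDerivAt_id x).div_const (Real.sqrt A))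
    exact this
  have h5 := ((h3.add (h4.const_mul A)).div_const 2)
  refine h5.congr_deriv ?_
  symm
  have hsq : Real.sqrt (1 - (x / Real.sqrt A) ^ 2) = Real.sqrt (A - x ^ 2) / Real.sqrt A := by
    rw [show 1 - (x / Real.sqrt A) ^ 2 = (A - x ^ 2) / A by
      rw [div_pow, Real.sq_sqrt hA.le]; field_simp]
    rw [Real.sqrt_div (by linarith)]
  rw [hsq]
  have hA' : Real.sqrt (A - x ^ 2) * Real.sqrt (A - x ^ 2) = A - x ^ 2 :=
    Real.mul_self_sqrt (by linarith)
  have h6 : A * (1 / (Real.sqrt (A - x ^ 2) / Real.sqrt A) * (1 / Real.sqrt A))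
      = A / Real.sqrt (A - x ^ 2) := by
    rw [one_div_div]; field_simp
  rw [h6]
  field_simp
  linear_combination hA'

lemma integral_aux {A Δ : ℝ} (hΔ : 0 < Δ) (hA0 : Δ ^ 2 ≤ A) :
    ∫ x in (0:ℝ)..Δ, 2 * Real.sqrt (A - x ^ 2)
      = A * Real.arcsin (Δ / Real.sqrt A) + Δ * Real.sqrt (A - Δ ^ 2) := by
  have hA : 0 < A := lt_of_lt_of_le (by positivity) hA0
  have hcont : Continuous fun x : ℝ =>
      (x * Real.sqrt (A - x ^ 2) + A * Real.arcsin (x / Real.sqrt A)) / 2 :=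
    ((continuous_id.mul (cont_sqrtA A)).add
      (continuous_const.mul (Real.continuous_arcsin.comp (continuous_id.div_const _)))).div_const 2
  have h := intervalIntegral.integral_eq_sub_of_hasDeriv_right_of_le hΔ.le
    hcont.continuousOn
    (fun x hx => (hasDeriv_aux hA (by nlinarith [hx.1, hx.2])).hasDerivWithinAt)
    ((cont_sqrtA A).intervalIntegrable 0 Δ)
  have h2 : ∫ x in (0:ℝ)..Δ, 2 * Real.sqrt (A - x ^ 2)
      = 2 * ∫ x in (0:ℝ)..Δ, Real.sqrt (A - x ^ 2) := intervalIntegral.integral_const_mul 2 _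
  rw [h2, h]
  simp [Real.arcsin_zero]
  ring

theorem Pl_eq_case2' (Δ Dy A : ℝ) (hΔ : 0 < Δ) (hDy : 0 < Dy)
    (hA0 : Δ ^ 2 ≤ A) (hA1 : A ≤ Dy ^ 2 / 4) :
    volume {p : ℝ × ℝ | p.1 ∈ Icc 0 Δ ∧ p.2 ∈ Icc (-(Dy / 2)) (Dy / 2) ∧
        A - p.1 ^ 2 ≤ p.2 ^ 2}
      = ENNReal.ofReal (Δ * Dy - A * Real.arcsin (Δ / Real.sqrt A)
          - Δ * Real.sqrt (A - Δ ^ 2)) := by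
  have hA : 0 < A := lt_of_lt_of_le (by positivity) hA0
  set g : ℝ → ℝ := fun x => Real.sqrt (A - x ^ 2) with hg
  set f : ℝ → ℝ := fun x => -Real.sqrt (A - x ^ 2) with hf
  have hgle : ∀ x ∈ Icc (0:ℝ) Δ, g x ≤ Dy / 2 := by
    intro x hx
    calc g x ≤ Real.sqrt A := Real.sqrt_le_sqrt (by nlinarith [sq_nonneg x])
    _ ≤ Dy / 2 := by
        rw [show A = A from rfl]
        calc Real.sqrt A ≤ Real.sqrt ((Dy/2)^2) := Real.sqrt_le_sqrt (by nlinarith)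
        _ = Dy/2 := Real.sqrt_sq (by positivity)
  -- set identity
  have hset : {p : ℝ × ℝ | p.1 ∈ Icc 0 Δ ∧ p.2 ∈ Icc (-(Dy / 2)) (Dy / 2) ∧
        A - p.1 ^ 2 ≤ p.2 ^ 2}
      = (Icc (0:ℝ) Δ ×ˢ Icc (-(Dy / 2)) (Dy / 2)) \ regionBetween f g (Icc 0 Δ) := by
    ext ⟨x, y⟩
    simp only [mem_setOf_eq, mem_diff, mem_prod, regionBetween, mem_Ioo, hf, hg]
    constructor
    · rintro ⟨hx, hy, hle⟩
      refine ⟨⟨hx, hy⟩, ?_⟩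
      rintro ⟨-, h1, h2⟩
      have : |y| < Real.sqrt (A - x ^ 2) := abs_lt.2 ⟨by linarith, h2⟩
      have : y ^ 2 < A - x ^ 2 := by
        have := mul_self_lt_mul_self (abs_nonneg y) this
        rw [abs_mul_abs_self, Real.mul_self_sqrt (by nlinarith [hx.1, hx.2])] at this
        nlinarith
      linarith
    · rintro ⟨⟨hx, hy⟩, hnot⟩
      refine ⟨hx, hy, ?_⟩
      by_contra hcon
      push_neg at hcon
      apply hnot
      refine ⟨hx, ?_, ?_⟩
      · have : |y| < Real.sqrt (A - x ^ 2) := by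
          rw [← Real.sqrt_sq_eq_abs]
          exact Real.sqrt_lt_sqrt (sq_nonneg y) hcon
        linarith [(abs_lt.1 this).1]
      · have : |y| < Real.sqrt (A - x ^ 2) := by
          rw [← Real.sqrt_sq_eq_abs]
          exact Real.sqrt_lt_sqrt (sq_nonneg y) hcon
        linarith [(abs_lt.1 this).2]
  have hgc : Continuous g := cont_sqrtA A
  have hreg : volume (regionBetween f g (Icc 0 Δ))
      = ENNReal.ofReal (A * Real.arcsin (Δ / Real.sqrt A) + Δ * Real.sqrt (A - Δ ^ 2)) := by
    rw [Measure.volume_eq_prod]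
    erw [volume_regionBetween_eq_integral (μ := volume) (show IntegrableOn f (Icc 0 Δ) from hgc.neg.integrableOn_Icc) (hgc.integrableOn_Icc)
      measurableSet_Icc (fun x _ => by
        simp only [hf, hg]
        have : 0 ≤ Real.sqrt (A - x ^ 2) := Real.sqrt_nonneg _
        linarith)]
    congr 1
    have : ∀ y : ℝ, (g - f) y = 2 * Real.sqrt (A - y ^ 2) := by
      intro y; simp [hf, hg]; ring
    rw [funext this, MeasureTheory.integral_Icc_eq_integral_Ioc,
      ← intervalIntegral.integral_of_le hΔ.le]
    exact integral_aux hΔ hA0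
  have hsub : regionBetween f g (Icc 0 Δ) ⊆ Icc (0:ℝ) Δ ×ˢ Icc (-(Dy / 2)) (Dy / 2) := by
    rintro ⟨x, y⟩ ⟨hx, hy⟩
    refine ⟨hx, ?_, ?_⟩
    · have := hy.1
      simp only [hf] at this
      have h2 := hgle x hx
      simp only [hg] at h2
      linarith
    · exact hy.2.le.trans (hgle x hx)
  have hmeas : MeasurableSet (regionBetween f g (Icc 0 Δ)) :=
    measurableSet_regionBetween hgc.neg.measurable hgc.measurable measurableSet_Icc
  have hI0 : 0 ≤ A * Real.arcsin (Δ / Real.sqrt A) + Δ * Real.sqrt (A - Δ ^ 2) := by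
    have h1 : 0 ≤ Real.arcsin (Δ / Real.sqrt A) :=
      Real.arcsin_nonneg.2 (by positivity)
    have h2 : 0 ≤ Real.sqrt (A - Δ ^ 2) := Real.sqrt_nonneg _
    positivity
  rw [hset, measure_diff hsub hmeas.nullMeasurableSet (by rw [hreg]; exact ENNReal.ofReal_ne_top),
    hreg, Measure.volume_eq_prod, Measure.prod_prod, Real.volume_Icc, Real.volume_Icc,
    show Δ - 0 = Δ by ring, show Dy / 2 - -(Dy / 2) = Dy by ring,
    ← ENNReal.ofReal_mul hΔ.le, ← ENNReal.ofReal_sub _ hI0]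
  congr 1
  ring

theorem Pl_eq_case2 (Δ Dy A : ℝ) (hΔ : 0 < Δ) (hDy : 0 < Dy)
    (hA0 : Δ ^ 2 ≤ A) (hA1 : A ≤ Dy ^ 2 / 4) :
    Pl Dy Δ A = 1 - A / (Dy * Δ) * Real.arcsin (Δ / Real.sqrt A)
      - Real.sqrt (A - Δ ^ 2) / Dy ∧
    volume {p : ℝ × ℝ | p.1 ∈ Icc 0 Δ ∧ p.2 ∈ Icc (-(Dy / 2)) (Dy / 2) ∧
        A - p.1 ^ 2 ≤ p.2 ^ 2}
      = ENNReal.ofReal (Δ * Dy - A * Real.arcsin (Δ / Real.sqrt A)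
          - Δ * Real.sqrt (A - Δ ^ 2)) := by
  have hvol := Pl_eq_case2' Δ Dy A hΔ hDy hA0 hA1
  have hA : 0 < A := lt_of_lt_of_le (by positivity) hA0
  refine ⟨?_, hvol⟩
  have hIle : A * Real.arcsin (Δ / Real.sqrt A) + Δ * Real.sqrt (A - Δ ^ 2) ≤ Δ * Dy := by
    rw [← integral_aux hΔ hA0]
    have h1 : ∫ x in (0:ℝ)..Δ, (Dy : ℝ) = Δ * Dy := by simp [mul_comm]
    rw [← h1]
    apply intervalIntegral.integral_mono_on hΔ.le
      ((continuous_const.mul (cont_sqrtA A)).intervalIntegrable 0 Δ)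
      (intervalIntegrable_const)
    intro x hx
    have : Real.sqrt (A - x ^ 2) ≤ Dy / 2 := by
      calc Real.sqrt (A - x ^ 2) ≤ Real.sqrt ((Dy/2)^2) :=
        Real.sqrt_le_sqrt (by nlinarith [hx.1, hx.2])
      _ = Dy/2 := Real.sqrt_sq (by positivity)
    simp only [Pi.mul_apply]
    linarith
  have hX0 : 0 ≤ Δ * Dy - A * Real.arcsin (Δ / Real.sqrt A) - Δ * Real.sqrt (A - Δ ^ 2) := by
    linarith
  rw [Pl, hvol, ENNReal.toReal_ofReal hX0]
  field_simp
end

section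
/- Let Δ > 0, D_y > 0 and A ∈ ℝ with D_y²/4 ≤ A ≤ Δ². Then P_l(Δ, A) = 1 − (A/(D_y Δ))·arcsin(D_y/(2√A)) − √(A − D_y²/4)/(2Δ); equivalently, the two-dimensional Lebesgue measure of {(ε, y) ∈ [0, Δ] × [−D_y/2, D_y/2] : y² ≥ A − ε²} equals Δ·D_y − A·arcsin(D_y/(2√A)) − (D_y/2)·√(A − D_y²/4). -/
open MeasureTheory Real Set
set_option maxHeartbeats 1000000
lemma sqrtF_deriv (A : ℝ) (hA : 0 < A) {x : ℝ} (hx : x ∈ Ioo (-Real.sqrt A) (Real.sqrt A)) :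
    HasDerivAt (fun x : ℝ => (x * Real.sqrt (A - x^2) + A * Real.arcsin (x / Real.sqrt A)) / 2)
      (Real.sqrt (A - x^2)) x := by
  set a := Real.sqrt A with ha
  have ha0 : 0 < a := Real.sqrt_pos.mpr hA
  have haA : a ^ 2 = A := Real.sq_sqrt hA.le
  have hx2 : x ^ 2 < A := by
    have := abs_lt.mpr ⟨hx.1, hx.2⟩
    nlinarith [abs_nonneg x, sq_abs x]
  have hs0 : 0 < A - x ^ 2 := by linarith
  set s := Real.sqrt (A - x^2) with hs
  have hspos : 0 < s := Real.sqrt_pos.mpr hs0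
  have hs2 : s ^ 2 = A - x ^ 2 := Real.sq_sqrt hs0.le
  have hsq : Real.sqrt (1 - (x / a) ^ 2) = s / a := by
    rw [show 1 - (x / a) ^ 2 = (s / a) ^ 2 by field_simp; nlinarith]
    exact Real.sqrt_sq (by positivity)
  have h1 : HasDerivAt (fun x : ℝ => A - x ^ 2) (-(2 * x)) x := by
    simpa using ((hasDerivAt_pow 2 x).const_sub A)
  have h2 : HasDerivAt (fun x : ℝ => Real.sqrt (A - x ^ 2)) (-(2 * x) / (2 * s)) x :=
    h1.sqrt (by positivity)
  have h3 : HasDerivAt (fun x : ℝ => x * Real.sqrt (A - x ^ 2))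
      (1 * s + x * (-(2 * x) / (2 * s))) x := (hasDerivAt_id x).mul h2
  have h4 : HasDerivAt (fun x : ℝ => Real.arcsin (x / a))
      ((1 / Real.sqrt (1 - (x / a) ^ 2)) * (1 / a)) x := by
    have hne1 : x / a ≠ -1 := by
      intro h
      have : x = -a := by field_simp at h; linarith
      rw [this] at hx; exact absurd hx.1 (lt_irrefl _)
    have hne2 : x / a ≠ 1 := by
      intro h
      have : x = a := by field_simp at h; exact h
      rw [this] at hx; exact absurd hx.2 (lt_irrefl _)
    have hd : HasDerivAt (fun x : ℝ => x / a) (1 / a) x := by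
      simpa using (hasDerivAt_id x).div_const a
    simpa [mul_comm, Function.comp_def] using (Real.hasDerivAt_arcsin hne1 hne2).comp x hd
  have := ((h3.add (h4.const_mul A)).div_const 2)
  refine this.congr_deriv ?_
  rw [hsq]
  field_simp
  linear_combination (-1) * hs2

lemma integral_sqrt_sub (A b c : ℝ) (hA : 0 < A) (hb : -Real.sqrt A ≤ b) (hbc : b ≤ c)
    (hc : c ≤ Real.sqrt A) :
    ∫ x in b..c, Real.sqrt (A - x^2) =
      (c * Real.sqrt (A - c^2) + A * Real.arcsin (c / Real.sqrt A)) / 2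
      - (b * Real.sqrt (A - b^2) + A * Real.arcsin (b / Real.sqrt A)) / 2 := by
  have hcontF : Continuous (fun x : ℝ =>
      (x * Real.sqrt (A - x^2) + A * Real.arcsin (x / Real.sqrt A)) / 2) := by
    have := Real.continuous_arcsin.comp (continuous_id.div_const (Real.sqrt A))
    fun_prop
  have hcont : Continuous (fun x : ℝ => Real.sqrt (A - x^2)) := by fun_prop
  refine intervalIntegral.integral_eq_sub_of_hasDeriv_right_of_le hbc
    hcontF.continuousOn (fun x hx => ?_) (hcont.intervalIntegrable b c)
  have : x ∈ Ioo (-Real.sqrt A) (Real.sqrt A) :=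
    ⟨lt_of_le_of_lt hb hx.1, lt_of_lt_of_le hx.2 hc⟩
  exact (sqrtF_deriv A hA this).hasDerivWithinAt

lemma slice_vol (Dy B : ℝ) (hDy : 0 < Dy) :
    volume {y : ℝ | y ∈ Icc (-(Dy/2)) (Dy/2) ∧ B ≤ y^2}
      = ENNReal.ofReal (Dy - 2 * min (Dy/2) (Real.sqrt B)) := by
  set t := Real.sqrt B with ht
  have ht0 : 0 ≤ t := Real.sqrt_nonneg _
  have hIoo : ∀ y : ℝ, y ∈ Ioo (-t) t ↔ y^2 < B := by
    intro y
    by_cases hB : 0 ≤ B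
    · have ht2 : t^2 = B := Real.sq_sqrt hB
      constructor
      · rintro ⟨h1, h2⟩; nlinarith
      · intro h; constructor <;> nlinarith
    · have : t = 0 := Real.sqrt_eq_zero_of_nonpos (le_of_not_ge hB)
      rw [this]
      simp only [neg_zero, Ioo_self, mem_empty_iff_false, false_iff, not_lt]
      nlinarith [sq_nonneg y]
  have hset : {y : ℝ | y ∈ Icc (-(Dy/2)) (Dy/2) ∧ B ≤ y^2}
      = Icc (-(Dy/2)) (Dy/2) \ (Icc (-(Dy/2)) (Dy/2) ∩ Ioo (-t) t) := by
    ext y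
    simp only [mem_setOf_eq, mem_diff, mem_inter_iff, hIoo, not_and, not_lt]
    constructor
    · rintro ⟨h1, h2⟩; exact ⟨h1, fun _ => h2⟩
    · rintro ⟨h1, h2⟩; exact ⟨h1, h2 h1⟩
  rw [hset, measure_diff inter_subset_left
    (measurableSet_Icc.inter measurableSet_Ioo).nullMeasurableSet
    (lt_of_le_of_lt (measure_mono inter_subset_left) (by rw [Real.volume_Icc]; exact ENNReal.ofReal_lt_top)).ne]
  have hvol_inter : volume (Icc (-(Dy/2)) (Dy/2) ∩ Ioo (-t) t)
      = ENNReal.ofReal (2 * min (Dy/2) t) := by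
    rcases le_or_gt t (Dy/2) with h | h
    · have : Ioo (-t) t ⊆ Icc (-(Dy/2)) (Dy/2) := by
        intro y hy; exact ⟨by linarith [hy.1], by linarith [hy.2]⟩
      rw [inter_eq_self_of_subset_right this, Real.volume_Ioo, min_eq_right h]
      ring_nf
    · have : Icc (-(Dy/2)) (Dy/2) ⊆ Ioo (-t) t := by
        intro y hy; exact ⟨by linarith [hy.1], by linarith [hy.2]⟩
      rw [inter_eq_self_of_subset_left this, Real.volume_Icc, min_eq_left h.le]
      ring_nf
  rw [hvol_inter, Real.volume_Icc]
  rw [← ENNReal.ofReal_sub _ (by positivity)]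
  congr 1
  have : min (Dy/2) t ≤ Dy/2 := min_le_left _ _
  ring_nf


theorem Pl_eq_case3 (Δ Dy A : ℝ) (hΔ : 0 < Δ) (hDy : 0 < Dy)
    (hA0 : Dy ^ 2 / 4 ≤ A) (hA1 : A ≤ Δ ^ 2) :
    Pl Dy Δ A = 1 - A / (Dy * Δ) * Real.arcsin (Dy / (2 * Real.sqrt A))
      - Real.sqrt (A - Dy ^ 2 / 4) / (2 * Δ) ∧
    volume {p : ℝ × ℝ | p.1 ∈ Icc 0 Δ ∧ p.2 ∈ Icc (-(Dy / 2)) (Dy / 2) ∧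
        A - p.1 ^ 2 ≤ p.2 ^ 2}
      = ENNReal.ofReal (Δ * Dy - A * Real.arcsin (Dy / (2 * Real.sqrt A))
          - Dy / 2 * Real.sqrt (A - Dy ^ 2 / 4)) := by
  have hApos : 0 < A := lt_of_lt_of_le (by positivity) hA0
  set a := Real.sqrt A with ha
  set e0 := Real.sqrt (A - Dy ^ 2 / 4) with he0
  have ha0 : 0 < a := Real.sqrt_pos.mpr hApos
  have ha2 : a ^ 2 = A := Real.sq_sqrt hApos.le
  have he0nn : 0 ≤ e0 := Real.sqrt_nonneg _
  have he02 : e0 ^ 2 = A - Dy ^ 2 / 4 := Real.sq_sqrt (by linarith)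
  have he0a : e0 ≤ a := Real.sqrt_le_sqrt (by nlinarith [sq_nonneg Dy])
  have haΔ : a ≤ Δ := by
    calc a ≤ Real.sqrt (Δ ^ 2) := Real.sqrt_le_sqrt hA1
    _ = Δ := Real.sqrt_sq hΔ.le
  have hDy2a : Dy / 2 ≤ a := by nlinarith [sq_nonneg (Dy/2 - a)]
  set S := {p : ℝ × ℝ | p.1 ∈ Icc 0 Δ ∧ p.2 ∈ Icc (-(Dy / 2)) (Dy / 2) ∧
    A - p.1 ^ 2 ≤ p.2 ^ 2} with hS
  set f : ℝ → ℝ := fun x => Dy - 2 * min (Dy / 2) (Real.sqrt (A - x ^ 2)) with hf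
  have hfnn : ∀ x, 0 ≤ f x := by
    intro x
    have : min (Dy / 2) (Real.sqrt (A - x ^ 2)) ≤ Dy / 2 := min_le_left _ _
    simp only [hf]; linarith
  have hmincont : Continuous (fun x : ℝ => min (Dy / 2) (Real.sqrt (A - x ^ 2))) :=
    continuous_const.min (by fun_prop)
  have hfc : Continuous f := continuous_const.sub (continuous_const.mul hmincont)
  -- measurability
  have hSm : MeasurableSet S := by
    apply MeasurableSet.inter
    · exact (measurable_fst) measurableSet_Icc
    apply MeasurableSet.inter
    · exact (measurable_snd) measurableSet_Icc
    · exact measurableSet_le (f := fun p : ℝ × ℝ => A - p.1 ^ 2)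
        (g := fun p : ℝ × ℝ => p.2 ^ 2) (by fun_prop) (by fun_prop)
  -- slices
  have hslice : ∀ ε : ℝ, volume (Prod.mk ε ⁻¹' S)
      = (Icc (0:ℝ) Δ).indicator (fun ε => ENNReal.ofReal (f ε)) ε := by
    intro ε
    by_cases hε : ε ∈ Icc (0:ℝ) Δ
    · rw [indicator_of_mem hε]
      have hpre : Prod.mk ε ⁻¹' S
          = {y : ℝ | y ∈ Icc (-(Dy/2)) (Dy/2) ∧ (A - ε ^ 2) ≤ y ^ 2} := by
        ext y; simp only [hS, mem_preimage, mem_setOf_eq]; tauto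
      rw [hpre, slice_vol Dy (A - ε ^ 2) hDy]
    · rw [indicator_of_notMem hε]
      have hpre : Prod.mk ε ⁻¹' S = ∅ := by
        ext y; simp only [hS, mem_preimage, mem_setOf_eq, mem_empty_iff_false, iff_false]
        tauto
      rw [hpre, measure_empty]
  -- Fubini
  have hvol : volume S = ∫⁻ ε : ℝ, (Icc (0:ℝ) Δ).indicator (fun ε => ENNReal.ofReal (f ε)) ε := by
    rw [MeasureTheory.Measure.volume_eq_prod, MeasureTheory.Measure.prod_apply hSm]
    exact lintegral_congr hslice
  rw [lintegral_indicator measurableSet_Icc] at hvol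
  have hint : IntegrableOn f (Icc (0:ℝ) Δ) := hfc.integrableOn_Icc
  rw [← MeasureTheory.ofReal_integral_eq_lintegral_ofReal hint
    (Filter.Eventually.of_forall hfnn)] at hvol
  -- convert to interval integral
  have hIcc : ∫ x in Icc (0:ℝ) Δ, f x = ∫ x in (0:ℝ)..Δ, f x := by
    rw [intervalIntegral.integral_of_le hΔ.le, MeasureTheory.integral_Icc_eq_integral_Ioc]
  rw [hIcc] at hvol
  -- compute the interval integral
  have hsqDy : Real.sqrt (Dy ^ 2 / 4) = Dy / 2 := by
    rw [show Dy ^ 2 / 4 = (Dy / 2) ^ 2 by ring]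
    exact Real.sqrt_sq (by positivity)
  have hI1 : ∫ x in (0:ℝ)..e0, min (Dy / 2) (Real.sqrt (A - x ^ 2)) = e0 * (Dy / 2) := by
    rw [intervalIntegral.integral_congr (g := fun _ => Dy / 2)]
    · simp; ring
    · intro x hx
      rw [uIcc_of_le he0nn] at hx
      have hx2 : x ^ 2 ≤ e0 ^ 2 := by nlinarith [hx.1, hx.2]
      have : Dy / 2 ≤ Real.sqrt (A - x ^ 2) := by
        rw [← hsqDy]
        apply Real.sqrt_le_sqrt; nlinarith
      simp [min_eq_left this]
  have harcs : Real.arcsin (e0 / a) = π / 2 - Real.arcsin (Dy / (2 * a)) := by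
    have hu0 : 0 ≤ Dy / (2 * a) := by positivity
    have hsin : Real.sin (Real.arccos (Dy / (2 * a))) = e0 / a := by
      rw [Real.sin_arccos]
      rw [show 1 - (Dy / (2 * a)) ^ 2 = (e0 / a) ^ 2 by
        field_simp; nlinarith]
      exact Real.sqrt_sq (by positivity)
    rw [← hsin, Real.arcsin_sin (by linarith [Real.arccos_nonneg (Dy / (2*a)), Real.pi_pos])
      (Real.arccos_le_pi_div_two.mpr hu0), Real.arccos_eq_pi_div_two_sub_arcsin]
  have hI2 : ∫ x in e0..a, min (Dy / 2) (Real.sqrt (A - x ^ 2))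
      = A * (π / 2) / 2 - (e0 * (Dy / 2) + A * (π / 2 - Real.arcsin (Dy / (2 * a)))) / 2 := by
    rw [intervalIntegral.integral_congr (g := fun x => Real.sqrt (A - x ^ 2))]
    · rw [integral_sqrt_sub A e0 a hApos (by linarith) he0a (le_refl a)]
      rw [show A - a ^ 2 = 0 by rw [ha2]; ring, Real.sqrt_zero,
        show A - e0 ^ 2 = Dy ^ 2 / 4 by rw [he02]; ring, hsqDy,
        div_self ha0.ne', Real.arcsin_one, harcs]
      ring
    · intro x hx
      rw [uIcc_of_le he0a] at hx
      have hx2 : e0 ^ 2 ≤ x ^ 2 := by nlinarith [hx.1, hx.2]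
      have : Real.sqrt (A - x ^ 2) ≤ Dy / 2 := by
        rw [← hsqDy]
        apply Real.sqrt_le_sqrt; nlinarith
      simp [min_eq_right this]
  have hI3 : ∫ x in a..Δ, min (Dy / 2) (Real.sqrt (A - x ^ 2)) = 0 := by
    rw [intervalIntegral.integral_congr (g := fun _ => (0:ℝ))]
    · simp
    · intro x hx
      rw [uIcc_of_le haΔ] at hx
      have hx2 : A ≤ x ^ 2 := by nlinarith [hx.1, hx.2]
      have h0 : Real.sqrt (A - x ^ 2) = 0 := Real.sqrt_eq_zero_of_nonpos (by linarith)
      simp [h0, min_eq_right hDy.le]; positivity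
  have hintmin : ∀ b c : ℝ, IntervalIntegrable
      (fun x : ℝ => min (Dy / 2) (Real.sqrt (A - x ^ 2))) volume b c :=
    fun b c => hmincont.intervalIntegrable b c
  have hImin : ∫ x in (0:ℝ)..Δ, min (Dy / 2) (Real.sqrt (A - x ^ 2))
      = (A * Real.arcsin (Dy / (2 * a)) / 2 + e0 * Dy / 4) := by
    rw [← intervalIntegral.integral_add_adjacent_intervals (hintmin 0 a) (hintmin a Δ),
      ← intervalIntegral.integral_add_adjacent_intervals (hintmin 0 e0) (hintmin e0 a),
      hI1, hI2, hI3]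
    ring
  have key : ∫ x in (0:ℝ)..Δ, f x
      = Δ * Dy - A * Real.arcsin (Dy / (2 * a)) - Dy / 2 * e0 := by
    simp only [hf]
    rw [intervalIntegral.integral_sub (intervalIntegrable_const)
      (show IntervalIntegrable (fun x => 2 * min (Dy / 2) (Real.sqrt (A - x ^ 2))) volume 0 Δ from
        (continuous_const.mul hmincont).intervalIntegrable _ _),
      intervalIntegral.integral_const_mul, hImin]
    simp
    ring
  have hnn : 0 ≤ ∫ x in (0:ℝ)..Δ, f x :=
    intervalIntegral.integral_nonneg hΔ.le (fun x _ => hfnn x)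
  rw [key] at hvol hnn
  refine ⟨?_, hvol⟩
  have hPl : Pl Dy Δ A = (volume S).toReal / (Δ * Dy) := rfl
  rw [hPl, hvol, ENNReal.toReal_ofReal hnn]
  field_simp
end

section
/- Let D_x, D_y, h, C, γ_thr > 0, α ≥ 0, M ≥ 1, and let 0 = a_0 < a_1 < ⋯ < a_M = D_x be a partition of [0, D_x] with x_k ∈ (a_{k−1}, a_k) for each k; set L_k = x_k − a_{k−1} > 0 and R_k = a_k − x_k > 0. Define A_k = C e^{−α x_k}/γ_thr − h². Then the outage probability of a user uniformly distributed on [0, D_x] × [−D_y/2, D_y/2], namely (1/(D_x D_y)) · λ²({(x, y) ∈ [0, D_x] × [−D_y/2, D_y/2] : γ_k(x, y) ≤ γ_thr, where k is the index with x ∈ [a_{k−1}, a_k)}), equals Σ_{k=1}^{M} [ (L_k/D_x)·P_l(L_k, A_k) + (R_k/D_x)·P_l(R_k, A_k) ]. -/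
open MeasureTheory Real Set

/- ### Auxiliary lemmas -/

lemma vol_vline (c : ℝ) : volume ({c} ×ˢ (univ : Set ℝ)) = 0 := by
  rw [Measure.volume_eq_prod, Measure.prod_prod, Real.volume_singleton, zero_mul]

lemma mp_reflect (c : ℝ) :
    MeasurePreserving (fun p : ℝ × ℝ => (c - p.1, p.2)) volume volume := by
  have h := (Measure.measurePreserving_sub_left (volume : Measure ℝ) c).prod
      (MeasurePreserving.id (volume : Measure ℝ))
  rw [← Measure.volume_eq_prod] at h
  exact h

lemma mp_shift (c : ℝ) :
    MeasurePreserving (fun p : ℝ × ℝ => (p.1 - c, p.2)) volume volume := by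
  have h := (measurePreserving_sub_right (volume : Measure ℝ) c).prod
      (MeasurePreserving.id (volume : Measure ℝ))
  rw [← Measure.volume_eq_prod] at h
  exact h

lemma meas_aux (I J : Set ℝ) (hI : MeasurableSet I) (hJ : MeasurableSet J)
    (f : ℝ → ℝ) (hf : Measurable f) :
    MeasurableSet {q : ℝ × ℝ | q.1 ∈ I ∧ q.2 ∈ J ∧ f q.1 ≤ q.2 ^ 2} := by
  have hset : {q : ℝ × ℝ | q.1 ∈ I ∧ q.2 ∈ J ∧ f q.1 ≤ q.2 ^ 2}
      = (I ×ˢ J) ∩ {q : ℝ × ℝ | f q.1 ≤ q.2 ^ 2} := by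
    ext q; simp [Set.mem_prod]; tauto
  rw [hset]
  exact (hI.prod hJ).inter (measurableSet_le (hf.comp measurable_fst) (by fun_prop))

lemma vol_eq_of_line (V W : Set (ℝ × ℝ)) (c : ℝ) (h1 : V ⊆ W)
    (h2 : W ⊆ V ∪ {c} ×ˢ univ) : volume V = volume W := by
  refine le_antisymm (measure_mono h1) ?_
  calc volume W ≤ volume (V ∪ {c} ×ˢ univ) := measure_mono h2
    _ ≤ volume V + volume ({c} ×ˢ (univ : Set ℝ)) := measure_union_le _ _
    _ = volume V := by rw [vol_vline, add_zero]

lemma vol_slab_left (Dy A b c : ℝ) :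
    volume {p : ℝ × ℝ | p.1 ∈ Ico b c ∧ p.2 ∈ Icc (-(Dy / 2)) (Dy / 2) ∧
        A - (p.1 - c) ^ 2 ≤ p.2 ^ 2}
      = volume {p : ℝ × ℝ | p.1 ∈ Icc 0 (c - b) ∧ p.2 ∈ Icc (-(Dy / 2)) (Dy / 2) ∧
        A - p.1 ^ 2 ≤ p.2 ^ 2} := by
  set V : Set (ℝ × ℝ) := {q : ℝ × ℝ | q.1 ∈ Ioc 0 (c - b) ∧ q.2 ∈ Icc (-(Dy / 2)) (Dy / 2) ∧
      A - q.1 ^ 2 ≤ q.2 ^ 2} with hV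
  have hVm : MeasurableSet V :=
    meas_aux _ _ measurableSet_Ioc measurableSet_Icc (fun t => A - t ^ 2) (by fun_prop)
  have hpre : {p : ℝ × ℝ | p.1 ∈ Ico b c ∧ p.2 ∈ Icc (-(Dy / 2)) (Dy / 2) ∧
      A - (p.1 - c) ^ 2 ≤ p.2 ^ 2} = (fun p : ℝ × ℝ => (c - p.1, p.2)) ⁻¹' V := by
    ext p
    simp only [hV, mem_setOf_eq, mem_preimage, mem_Ioc, mem_Ico, mem_Icc]
    constructor
    · rintro ⟨⟨h1, h2⟩, hy, hq⟩
      refine ⟨⟨by linarith, by linarith⟩, hy, ?_⟩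
      have hsq : (c - p.1) ^ 2 = (p.1 - c) ^ 2 := by ring
      rw [hsq]; exact hq
    · rintro ⟨⟨h1, h2⟩, hy, hq⟩
      refine ⟨⟨by linarith, by linarith⟩, hy, ?_⟩
      have hsq : (p.1 - c) ^ 2 = (c - p.1) ^ 2 := by ring
      rw [hsq]; exact hq
  rw [hpre, (mp_reflect c).measure_preimage hVm.nullMeasurableSet]
  apply vol_eq_of_line V _ 0
  · intro q hq; exact ⟨⟨hq.1.1.le, hq.1.2⟩, hq.2⟩
  · intro q hq
    rcases eq_or_lt_of_le hq.1.1 with h | h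
    · exact Or.inr ⟨h.symm, trivial⟩
    · exact Or.inl ⟨⟨h, hq.1.2⟩, hq.2⟩

lemma vol_slab_right (Dy A c d : ℝ) :
    volume {p : ℝ × ℝ | p.1 ∈ Ico c d ∧ p.2 ∈ Icc (-(Dy / 2)) (Dy / 2) ∧
        A - (p.1 - c) ^ 2 ≤ p.2 ^ 2}
      = volume {p : ℝ × ℝ | p.1 ∈ Icc 0 (d - c) ∧ p.2 ∈ Icc (-(Dy / 2)) (Dy / 2) ∧
        A - p.1 ^ 2 ≤ p.2 ^ 2} := by
  set V : Set (ℝ × ℝ) := {q : ℝ × ℝ | q.1 ∈ Ico 0 (d - c) ∧ q.2 ∈ Icc (-(Dy / 2)) (Dy / 2) ∧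
      A - q.1 ^ 2 ≤ q.2 ^ 2} with hV
  have hVm : MeasurableSet V :=
    meas_aux _ _ measurableSet_Ico measurableSet_Icc (fun t => A - t ^ 2) (by fun_prop)
  have hpre : {p : ℝ × ℝ | p.1 ∈ Ico c d ∧ p.2 ∈ Icc (-(Dy / 2)) (Dy / 2) ∧
      A - (p.1 - c) ^ 2 ≤ p.2 ^ 2} = (fun p : ℝ × ℝ => (p.1 - c, p.2)) ⁻¹' V := by
    ext p
    simp only [hV, mem_setOf_eq, mem_preimage, mem_Ico, mem_Icc]
    constructor
    · rintro ⟨⟨h1, h2⟩, hy, hq⟩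
      exact ⟨⟨by linarith, by linarith⟩, hy, hq⟩
    · rintro ⟨⟨h1, h2⟩, hy, hq⟩
      exact ⟨⟨by linarith, by linarith⟩, hy, hq⟩
  rw [hpre, (mp_shift c).measure_preimage hVm.nullMeasurableSet]
  apply vol_eq_of_line V _ (d - c)
  · intro q hq; exact ⟨⟨hq.1.1, hq.1.2.le⟩, hq.2⟩
  · intro q hq
    rcases eq_or_lt_of_le hq.1.2 with h | h
    · exact Or.inr ⟨h, trivial⟩
    · exact Or.inl ⟨⟨hq.1.1, h⟩, hq.2⟩

/-- Outage probability of the two-state pinching-antenna system: a user uniformly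
distributed on `[0, D_x] × [−D_y/2, D_y/2]` is served by the `k`-th antenna (at
horizontal position `x k`, on a waveguide at height `h` with attenuation `α`) whenever
its abscissa lies in `[a (k−1), a k)`, and is in outage when the received SNR
`C e^{−α x_k} / ((x − x_k)² + y² + h²)` does not exceed `γ_thr`.  The outage
probability equals `Σ_k (L_k/D_x)·P_l(L_k, A_k) + (R_k/D_x)·P_l(R_k, A_k)`. -/
theorem outage_probability_two_state_PAS
    (Dx Dy h C γthr α : ℝ) (M : ℕ)
    (hDx : 0 < Dx) (hDy : 0 < Dy) (hh : 0 < h) (hC : 0 < C) (hγ : 0 < γthr)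
    (hα : 0 ≤ α) (hM : 1 ≤ M)
    (a x : ℕ → ℝ)
    (ha0 : a 0 = 0) (haM : a M = Dx)
    (hmono : ∀ k ∈ Finset.Icc 1 M, a (k - 1) < a k)
    (hx : ∀ k ∈ Finset.Icc 1 M, x k ∈ Ioo (a (k - 1)) (a k)) :
    (volume {p : ℝ × ℝ | p.1 ∈ Icc 0 Dx ∧ p.2 ∈ Icc (-(Dy / 2)) (Dy / 2) ∧
        ∀ k ∈ Finset.Icc 1 M, p.1 ∈ Ico (a (k - 1)) (a k) →
          C * Real.exp (-α * x k) / ((p.1 - x k) ^ 2 + p.2 ^ 2 + h ^ 2) ≤ γthr}).toReal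
        / (Dx * Dy)
      = ∑ k ∈ Finset.Icc 1 M,
          ((x k - a (k - 1)) / Dx *
              Pl Dy (x k - a (k - 1)) (C * Real.exp (-α * x k) / γthr - h ^ 2)
            + (a k - x k) / Dx *
              Pl Dy (a k - x k) (C * Real.exp (-α * x k) / γthr - h ^ 2)) := by
  classical
  -- strict monotonicity of the partition
  have hlt : ∀ k, 1 ≤ k → k ≤ M → a (k - 1) < a k := fun k h1 h2 =>
    hmono k (Finset.mem_Icc.mpr ⟨h1, h2⟩)
  have hstrict : ∀ i j, i < j → j ≤ M → a i < a j := by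
    intro i j hij hjM
    induction j with
    | zero => omega
    | succ n ih =>
      have hn : a n < a (n + 1) := by
        have := hlt (n + 1) (by omega) hjM
        simpa using this
      rcases Nat.lt_succ_iff_lt_or_eq.mp hij with hc | hc
      · exact (ih hc (by omega)).trans hn
      · rw [hc]; exact hn
  have hmono' : ∀ i j, i ≤ j → j ≤ M → a i ≤ a j := by
    intro i j hij hjM
    rcases eq_or_lt_of_le hij with hc | hc
    · rw [hc]
    · exact (hstrict i j hc hjM).le
  -- covering of [0, Dx)
  have hcover : ∀ t : ℝ, 0 ≤ t → t < Dx →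
      ∃ k, 1 ≤ k ∧ k ≤ M ∧ a (k - 1) ≤ t ∧ t < a k := by
    intro t ht0 htD
    have hex : ∃ n, t < a n := ⟨M, haM ▸ htD⟩
    have hk1 : t < a (Nat.find hex) := Nat.find_spec hex
    have hk0 : Nat.find hex ≠ 0 := by
      intro hzero
      rw [hzero, ha0] at hk1
      exact absurd hk1 (not_lt.mpr ht0)
    have hkM : Nat.find hex ≤ M := Nat.find_min' hex (haM ▸ htD)
    have hk2 : a (Nat.find hex - 1) ≤ t := by
      by_contra hcon
      push_neg at hcon
      exact Nat.find_min hex (by omega) hcon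
    exact ⟨Nat.find hex, by omega, hkM, hk2, hk1⟩
  -- pairwise disjointness of the cells
  have hIcoDisj : ∀ j k, 1 ≤ j → j ≤ M → 1 ≤ k → k ≤ M → j ≠ k →
      ∀ t : ℝ, t ∈ Ico (a (j - 1)) (a j) → t ∈ Ico (a (k - 1)) (a k) → False := by
    intro j k hj1 hjM hk1 hkM hjk t htj htk
    rcases lt_or_gt_of_ne hjk with hc | hc
    · have h2 : a j ≤ a (k - 1) := hmono' j (k - 1) (by omega) (by omega)
      have := htj.2; have := htk.1; linarith
    · have h2 : a k ≤ a (j - 1) := hmono' k (j - 1) (by omega) (by omega)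
      have := htk.2; have := htj.1; linarith
  -- the SNR condition rewritten
  have hiff : ∀ k (p : ℝ × ℝ),
      (C * Real.exp (-α * x k) / ((p.1 - x k) ^ 2 + p.2 ^ 2 + h ^ 2) ≤ γthr) ↔
      (C * Real.exp (-α * x k) / γthr - h ^ 2 - (p.1 - x k) ^ 2 ≤ p.2 ^ 2) := by
    intro k p
    have hd : (0:ℝ) < (p.1 - x k) ^ 2 + p.2 ^ 2 + h ^ 2 := by positivity
    rw [div_le_iff₀ hd]
    constructor
    · intro hle
      have h2 : C * Real.exp (-α * x k) / γthr ≤ (p.1 - x k) ^ 2 + p.2 ^ 2 + h ^ 2 :=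
        (div_le_iff₀ hγ).mpr
          (by linarith [mul_comm γthr ((p.1 - x k) ^ 2 + p.2 ^ 2 + h ^ 2)])
      linarith
    · intro hle
      have h2 : C * Real.exp (-α * x k) / γthr ≤ (p.1 - x k) ^ 2 + p.2 ^ 2 + h ^ 2 := by
        linarith
      have h3 := (div_le_iff₀ hγ).mp h2
      linarith [mul_comm ((p.1 - x k) ^ 2 + p.2 ^ 2 + h ^ 2) γthr]
  -- the cells
  set T : ℕ → Set (ℝ × ℝ) := fun k =>
    {p : ℝ × ℝ | p.1 ∈ Ico (a (k - 1)) (a k) ∧ p.2 ∈ Icc (-(Dy / 2)) (Dy / 2) ∧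
      C * Real.exp (-α * x k) / γthr - h ^ 2 - (p.1 - x k) ^ 2 ≤ p.2 ^ 2} with hT
  have hTm : ∀ k, MeasurableSet (T k) := by
    intro k
    rw [hT]
    exact meas_aux _ _ measurableSet_Ico measurableSet_Icc
      (fun t => C * Real.exp (-α * x k) / γthr - h ^ 2 - (t - x k) ^ 2) (by fun_prop)
  set S : Set (ℝ × ℝ) := {p : ℝ × ℝ | p.1 ∈ Icc 0 Dx ∧ p.2 ∈ Icc (-(Dy / 2)) (Dy / 2) ∧
      ∀ k ∈ Finset.Icc 1 M, p.1 ∈ Ico (a (k - 1)) (a k) →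
        C * Real.exp (-α * x k) / ((p.1 - x k) ^ 2 + p.2 ^ 2 + h ^ 2) ≤ γthr} with hS
  -- the union of cells agrees with S up to a null line
  have hUnS : (⋃ k ∈ Finset.Icc 1 M, T k) ⊆ S := by
    intro p hp
    simp only [mem_iUnion, exists_prop] at hp
    obtain ⟨k, hk, hpk⟩ := hp
    rw [Finset.mem_Icc] at hk
    rw [hT] at hpk
    obtain ⟨hp1, hp2, hp3⟩ := hpk
    refine ⟨⟨?_, ?_⟩, hp2, ?_⟩
    · exact le_trans (by rw [← ha0]; exact hmono' 0 (k - 1) (by omega) (by omega)) hp1.1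
    · exact le_of_lt (lt_of_lt_of_le hp1.2 (by rw [← haM]; exact hmono' k M hk.2 le_rfl))
    · intro j hj hpj
      rw [Finset.mem_Icc] at hj
      by_cases hjk : j = k
      · subst hjk; exact (hiff j p).mpr hp3
      · exact absurd hpj (fun hpj => hIcoDisj j k hj.1 hj.2 hk.1 hk.2 hjk p.1 hpj hp1)
  have hSUn : S ⊆ (⋃ k ∈ Finset.Icc 1 M, T k) ∪ {Dx} ×ˢ (univ : Set ℝ) := by
    intro p hp
    rw [hS] at hp
    obtain ⟨hp1, hp2, hp3⟩ := hp
    rcases eq_or_lt_of_le hp1.2 with hc | hc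
    · exact Or.inr ⟨hc, trivial⟩
    · obtain ⟨k, hk1, hkM, hal, har⟩ := hcover p.1 hp1.1 hc
      refine Or.inl (mem_iUnion₂.mpr ⟨k, Finset.mem_Icc.mpr ⟨hk1, hkM⟩, ?_⟩)
      rw [hT]
      exact ⟨⟨hal, har⟩, hp2,
        (hiff k p).mp (hp3 k (Finset.mem_Icc.mpr ⟨hk1, hkM⟩) ⟨hal, har⟩)⟩
  have hdisjT : (↑(Finset.Icc 1 M) : Set ℕ).PairwiseDisjoint T := by
    intro j hj k hk hjk
    simp only [Finset.coe_Icc, mem_Icc] at hj hk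
    refine Set.disjoint_left.mpr ?_
    intro p hpj hpk
    rw [hT] at hpj hpk
    exact hIcoDisj j k hj.1 hj.2 hk.1 hk.2 hjk p.1 hpj.1 hpk.1
  have hvolUn : volume (⋃ k ∈ Finset.Icc 1 M, T k) = ∑ k ∈ Finset.Icc 1 M, volume (T k) :=
    measure_biUnion_finset hdisjT (fun k _ => hTm k)
  have hSvol : volume S = ∑ k ∈ Finset.Icc 1 M, volume (T k) := by
    refine le_antisymm ?_ ?_
    · calc volume S ≤ volume ((⋃ k ∈ Finset.Icc 1 M, T k) ∪ {Dx} ×ˢ (univ : Set ℝ)) :=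
            measure_mono hSUn
        _ ≤ volume (⋃ k ∈ Finset.Icc 1 M, T k) + volume ({Dx} ×ˢ (univ : Set ℝ)) :=
            measure_union_le _ _
        _ = ∑ k ∈ Finset.Icc 1 M, volume (T k) := by rw [vol_vline, add_zero, hvolUn]
    · rw [← hvolUn]; exact measure_mono hUnS
  -- each cell splits into left and right slabs
  have hTk : ∀ k ∈ Finset.Icc 1 M,
      volume (T k) =
        volume {p : ℝ × ℝ | p.1 ∈ Icc 0 (x k - a (k - 1)) ∧
            p.2 ∈ Icc (-(Dy / 2)) (Dy / 2) ∧
            C * Real.exp (-α * x k) / γthr - h ^ 2 - p.1 ^ 2 ≤ p.2 ^ 2} +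
        volume {p : ℝ × ℝ | p.1 ∈ Icc 0 (a k - x k) ∧
            p.2 ∈ Icc (-(Dy / 2)) (Dy / 2) ∧
            C * Real.exp (-α * x k) / γthr - h ^ 2 - p.1 ^ 2 ≤ p.2 ^ 2} := by
    intro k hk
    have hxk := hx k hk
    have hsplit : T k =
        {p : ℝ × ℝ | p.1 ∈ Ico (a (k - 1)) (x k) ∧ p.2 ∈ Icc (-(Dy / 2)) (Dy / 2) ∧
            C * Real.exp (-α * x k) / γthr - h ^ 2 - (p.1 - x k) ^ 2 ≤ p.2 ^ 2} ∪
        {p : ℝ × ℝ | p.1 ∈ Ico (x k) (a k) ∧ p.2 ∈ Icc (-(Dy / 2)) (Dy / 2) ∧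
            C * Real.exp (-α * x k) / γthr - h ^ 2 - (p.1 - x k) ^ 2 ≤ p.2 ^ 2} := by
      ext p
      rw [hT]
      simp only [mem_setOf_eq, mem_union, mem_Ico]
      constructor
      · rintro ⟨⟨h1, h2⟩, hy, hq⟩
        rcases lt_or_ge p.1 (x k) with hc | hc
        · exact Or.inl ⟨⟨h1, hc⟩, hy, hq⟩
        · exact Or.inr ⟨⟨hc, h2⟩, hy, hq⟩
      · rintro (⟨⟨h1, h2⟩, hy, hq⟩ | ⟨⟨h1, h2⟩, hy, hq⟩)
        · exact ⟨⟨h1, h2.trans hxk.2⟩, hy, hq⟩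
        · exact ⟨⟨hxk.1.le.trans h1, h2⟩, hy, hq⟩
    have hdLR : Disjoint
        {p : ℝ × ℝ | p.1 ∈ Ico (a (k - 1)) (x k) ∧ p.2 ∈ Icc (-(Dy / 2)) (Dy / 2) ∧
            C * Real.exp (-α * x k) / γthr - h ^ 2 - (p.1 - x k) ^ 2 ≤ p.2 ^ 2}
        {p : ℝ × ℝ | p.1 ∈ Ico (x k) (a k) ∧ p.2 ∈ Icc (-(Dy / 2)) (Dy / 2) ∧
            C * Real.exp (-α * x k) / γthr - h ^ 2 - (p.1 - x k) ^ 2 ≤ p.2 ^ 2} := by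
      refine Set.disjoint_left.mpr ?_
      rintro p ⟨h1, -, -⟩ ⟨h2, -, -⟩
      exact absurd h2.1 (not_le.mpr h1.2)
    have hmR : MeasurableSet
        {p : ℝ × ℝ | p.1 ∈ Ico (x k) (a k) ∧ p.2 ∈ Icc (-(Dy / 2)) (Dy / 2) ∧
            C * Real.exp (-α * x k) / γthr - h ^ 2 - (p.1 - x k) ^ 2 ≤ p.2 ^ 2} :=
      meas_aux _ _ measurableSet_Ico measurableSet_Icc
        (fun t => C * Real.exp (-α * x k) / γthr - h ^ 2 - (t - x k) ^ 2) (by fun_prop)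
    rw [hsplit, measure_union hdLR hmR,
      vol_slab_left Dy (C * Real.exp (-α * x k) / γthr - h ^ 2) (a (k - 1)) (x k),
      vol_slab_right Dy (C * Real.exp (-α * x k) / γthr - h ^ 2) (x k) (a k)]
  -- finiteness
  have hUfin : ∀ (Δ A' : ℝ), volume {p : ℝ × ℝ | p.1 ∈ Icc 0 Δ ∧
      p.2 ∈ Icc (-(Dy / 2)) (Dy / 2) ∧ A' - p.1 ^ 2 ≤ p.2 ^ 2} ≠ ⊤ := by
    intro Δ A'
    have hsub : {p : ℝ × ℝ | p.1 ∈ Icc 0 Δ ∧ p.2 ∈ Icc (-(Dy / 2)) (Dy / 2) ∧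
        A' - p.1 ^ 2 ≤ p.2 ^ 2} ⊆ Icc 0 Δ ×ˢ Icc (-(Dy / 2)) (Dy / 2) :=
      fun q hq => ⟨hq.1, hq.2.1⟩
    have hfin : volume (Icc (0:ℝ) Δ ×ˢ Icc (-(Dy / 2)) (Dy / 2)) < ⊤ := by
      rw [Measure.volume_eq_prod, Measure.prod_prod, Real.volume_Icc, Real.volume_Icc]
      exact ENNReal.mul_lt_top ENNReal.ofReal_lt_top ENNReal.ofReal_lt_top
    exact ((measure_mono hsub).trans_lt hfin).ne
  have hTfin : ∀ k ∈ Finset.Icc 1 M, volume (T k) ≠ ⊤ := by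
    intro k hk
    rw [hTk k hk]
    exact ENNReal.add_ne_top.mpr ⟨hUfin _ _, hUfin _ _⟩
  -- final computation
  have hPl : ∀ Δ A', Pl Dy Δ A' = (volume {p : ℝ × ℝ | p.1 ∈ Icc 0 Δ ∧
      p.2 ∈ Icc (-(Dy / 2)) (Dy / 2) ∧ A' - p.1 ^ 2 ≤ p.2 ^ 2}).toReal / (Δ * Dy) :=
    fun _ _ => rfl
  rw [hSvol, ENNReal.toReal_sum hTfin, Finset.sum_div]
  refine Finset.sum_congr rfl ?_
  intro k hk
  have hxk := hx k hk
  have hL : (0:ℝ) < x k - a (k - 1) := by have := hxk.1; linarith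
  have hR : (0:ℝ) < a k - x k := by have := hxk.2; linarith
  rw [hTk k hk, ENNReal.toReal_add (hUfin _ _) (hUfin _ _), hPl, hPl]
  have hL0 : x k - a (k - 1) ≠ 0 := ne_of_gt hL
  have hR0 : a k - x k ≠ 0 := ne_of_gt hR
  field_simp
end

section
/- Let Δ > 0, D_y > 0, h > 0 and C₀ > 0. Then ∫₀^{D_y/2} ∫₀^{Δ} ln(1 + C₀/(ε² + y² + h²)) dε dy = I_i(C₀ + h²) + I_j(C₀ + h²) − I_i(h²) − I_j(h²), where I_i(x) = ∫₀^{D_y/2} Δ · ln(Δ² + x + y²) dy and I_j(x) = ∫₀^{D_y/2} 2√(x + y²) · arctan(Δ/√(x + y²)) dy. -/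
open MeasureTheory Real Set

lemma log_sq_add_integral (c Δ : ℝ) (hc : 0 < c) :
    ∫ ε in (0:ℝ)..Δ, Real.log (ε ^ 2 + c)
      = Δ * Real.log (Δ ^ 2 + c) - 2 * Δ
        + 2 * Real.sqrt c * Real.arctan (Δ / Real.sqrt c) := by
  have hs : 0 < Real.sqrt c := Real.sqrt_pos.2 hc
  have key : ∀ x : ℝ, HasDerivAt (fun ε => ε * Real.log (ε ^ 2 + c) - 2 * ε
      + 2 * Real.sqrt c * Real.arctan (ε / Real.sqrt c)) (Real.log (x ^ 2 + c)) x := by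
    intro x
    have hpos : 0 < x ^ 2 + c := by positivity
    have h1 : HasDerivAt (fun ε : ℝ => ε ^ 2 + c) (2 * x) x := by
      simpa using ((hasDerivAt_pow 2 x).add_const c)
    have h2 : HasDerivAt (fun ε : ℝ => Real.log (ε ^ 2 + c)) ((x ^ 2 + c)⁻¹ * (2 * x)) x :=
      by have := (Real.hasDerivAt_log hpos.ne').comp x h1; exact this
    have h3 : HasDerivAt (fun ε : ℝ => ε * Real.log (ε ^ 2 + c))
        (1 * Real.log (x ^ 2 + c) + x * ((x ^ 2 + c)⁻¹ * (2 * x))) x :=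
      (hasDerivAt_id x).mul h2
    have h4 : HasDerivAt (fun ε : ℝ => ε / Real.sqrt c) (1 / Real.sqrt c) x := by
      simpa using (hasDerivAt_id x).div_const (Real.sqrt c)
    have h5 : HasDerivAt (fun ε : ℝ => Real.arctan (ε / Real.sqrt c))
        ((1 / (1 + (x / Real.sqrt c) ^ 2)) * (1 / Real.sqrt c)) x :=
      (Real.hasDerivAt_arctan _).comp x h4
    have h6 := (h3.sub ((hasDerivAt_id x).const_mul 2)).add (h5.const_mul (2 * Real.sqrt c))
    refine h6.congr_deriv ?_
    have hsq : Real.sqrt c ^ 2 = c := Real.sq_sqrt hc.le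
    rw [div_pow, hsq]
    field_simp
    ring
  have hcont : IntervalIntegrable (fun ε => Real.log (ε ^ 2 + c)) volume 0 Δ := by
    apply Continuous.intervalIntegrable
    exact Continuous.log (by continuity) (fun x => by positivity)
  rw [intervalIntegral.integral_eq_sub_of_hasDerivAt (fun x _ => key x) hcont]
  simp

lemma inner_integral_eval (b C0 Δ : ℝ) (hb : 0 < b) (hC0 : 0 < C0) :
    ∫ ε in (0:ℝ)..Δ, Real.log (1 + C0 / (ε ^ 2 + b))
      = (Δ * Real.log (Δ ^ 2 + (C0 + b))
          + 2 * Real.sqrt (C0 + b) * Real.arctan (Δ / Real.sqrt (C0 + b)))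
        - (Δ * Real.log (Δ ^ 2 + b)
          + 2 * Real.sqrt b * Real.arctan (Δ / Real.sqrt b)) := by
  have hpt : ∀ ε : ℝ, Real.log (1 + C0 / (ε ^ 2 + b))
      = Real.log (ε ^ 2 + (C0 + b)) - Real.log (ε ^ 2 + b) := by
    intro ε
    have h1 : 0 < ε ^ 2 + b := by positivity
    have h2 : 0 < ε ^ 2 + (C0 + b) := by positivity
    rw [← Real.log_div h2.ne' h1.ne']
    congr 1
    field_simp
    ring
  have hi1 : IntervalIntegrable (fun ε => Real.log (ε ^ 2 + (C0 + b))) volume 0 Δ := by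
    apply Continuous.intervalIntegrable
    exact Continuous.log (by continuity) (fun x => by positivity)
  have hi2 : IntervalIntegrable (fun ε => Real.log (ε ^ 2 + b)) volume 0 Δ := by
    apply Continuous.intervalIntegrable
    exact Continuous.log (by continuity) (fun x => by positivity)
  simp_rw [hpt]
  rw [intervalIntegral.integral_sub hi1 hi2,
    log_sq_add_integral _ _ (by positivity), log_sq_add_integral _ _ hb]
  ring

/-- Decomposition of the conditional ergodic-rate double integral into the auxiliary
integrals `I_i(x) = ∫₀^{D_y/2} Δ ln(Δ² + x + y²) dy` and
`I_j(x) = ∫₀^{D_y/2} 2√(x + y²) arctan(Δ/√(x + y²)) dy`. -/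
theorem rate_integral_decomposition (Δ Dy h C0 : ℝ)
    (hΔ : 0 < Δ) (hDy : 0 < Dy) (hh : 0 < h) (hC0 : 0 < C0) :
    (∫ y in (0 : ℝ)..(Dy / 2), ∫ ε in (0 : ℝ)..Δ,
        Real.log (1 + C0 / (ε ^ 2 + y ^ 2 + h ^ 2)))
      = (∫ y in (0 : ℝ)..(Dy / 2), Δ * Real.log (Δ ^ 2 + (C0 + h ^ 2) + y ^ 2))
        + (∫ y in (0 : ℝ)..(Dy / 2), 2 * Real.sqrt ((C0 + h ^ 2) + y ^ 2) *
            Real.arctan (Δ / Real.sqrt ((C0 + h ^ 2) + y ^ 2)))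
        - (∫ y in (0 : ℝ)..(Dy / 2), Δ * Real.log (Δ ^ 2 + h ^ 2 + y ^ 2))
        - (∫ y in (0 : ℝ)..(Dy / 2), 2 * Real.sqrt (h ^ 2 + y ^ 2) *
            Real.arctan (Δ / Real.sqrt (h ^ 2 + y ^ 2))) := by
  have hpt : ∀ y : ℝ, (∫ ε in (0:ℝ)..Δ, Real.log (1 + C0 / (ε ^ 2 + y ^ 2 + h ^ 2)))
      = Δ * Real.log (Δ ^ 2 + (C0 + h ^ 2) + y ^ 2)
        + 2 * Real.sqrt ((C0 + h ^ 2) + y ^ 2) *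
            Real.arctan (Δ / Real.sqrt ((C0 + h ^ 2) + y ^ 2))
        - Δ * Real.log (Δ ^ 2 + h ^ 2 + y ^ 2)
        - 2 * Real.sqrt (h ^ 2 + y ^ 2) *
            Real.arctan (Δ / Real.sqrt (h ^ 2 + y ^ 2)) := by
    intro y
    have hb : 0 < y ^ 2 + h ^ 2 := by positivity
    have := inner_integral_eval (y ^ 2 + h ^ 2) C0 Δ hb hC0
    simp_rw [show ∀ ε : ℝ, ε ^ 2 + y ^ 2 + h ^ 2 = ε ^ 2 + (y ^ 2 + h ^ 2) from
      fun ε => by ring] at this ⊢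
    rw [this]
    rw [show C0 + (y ^ 2 + h ^ 2) = (C0 + h ^ 2) + y ^ 2 from by ring,
      show Δ ^ 2 + ((C0 + h ^ 2) + y ^ 2) = Δ ^ 2 + (C0 + h ^ 2) + y ^ 2 from by ring,
      show y ^ 2 + h ^ 2 = h ^ 2 + y ^ 2 from by ring,
      show Δ ^ 2 + (h ^ 2 + y ^ 2) = Δ ^ 2 + h ^ 2 + y ^ 2 from by ring]
    ring
  have c1 : Continuous fun y : ℝ => Δ * Real.log (Δ ^ 2 + (C0 + h ^ 2) + y ^ 2) :=
    continuous_const.mul (Continuous.log (by continuity) (fun y => by positivity))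
  have c3 : Continuous fun y : ℝ => Δ * Real.log (Δ ^ 2 + h ^ 2 + y ^ 2) :=
    continuous_const.mul (Continuous.log (by continuity) (fun y => by positivity))
  have csqrt1 : Continuous fun y : ℝ => Real.sqrt ((C0 + h ^ 2) + y ^ 2) :=
    (by continuity : Continuous fun y : ℝ => (C0 + h ^ 2) + y ^ 2).sqrt
  have csqrt2 : Continuous fun y : ℝ => Real.sqrt (h ^ 2 + y ^ 2) :=
    (by continuity : Continuous fun y : ℝ => h ^ 2 + y ^ 2).sqrt
  have hne1 : ∀ y : ℝ, Real.sqrt ((C0 + h ^ 2) + y ^ 2) ≠ 0 := fun y =>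
    (Real.sqrt_pos.2 (by positivity)).ne'
  have hne2 : ∀ y : ℝ, Real.sqrt (h ^ 2 + y ^ 2) ≠ 0 := fun y =>
    (Real.sqrt_pos.2 (by positivity)).ne'
  have c2 : Continuous fun y : ℝ => 2 * Real.sqrt ((C0 + h ^ 2) + y ^ 2) *
      Real.arctan (Δ / Real.sqrt ((C0 + h ^ 2) + y ^ 2)) :=
    (continuous_const.mul csqrt1).mul
      (Real.continuous_arctan.comp (continuous_const.div csqrt1 hne1))
  have c4 : Continuous fun y : ℝ => 2 * Real.sqrt (h ^ 2 + y ^ 2) *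
      Real.arctan (Δ / Real.sqrt (h ^ 2 + y ^ 2)) :=
    (continuous_const.mul csqrt2).mul
      (Real.continuous_arctan.comp (continuous_const.div csqrt2 hne2))
  have i1 : IntervalIntegrable _ volume (0:ℝ) (Dy/2) := c1.intervalIntegrable _ _
  have i2 : IntervalIntegrable _ volume (0:ℝ) (Dy/2) := c2.intervalIntegrable _ _
  have i3 : IntervalIntegrable _ volume (0:ℝ) (Dy/2) := c3.intervalIntegrable _ _
  have i4 : IntervalIntegrable _ volume (0:ℝ) (Dy/2) := c4.intervalIntegrable _ _
  simp_rw [hpt]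
  rw [intervalIntegral.integral_sub ((i1.add i2).sub i3) i4,
    intervalIntegral.integral_sub (i1.add i2) i3,
    intervalIntegral.integral_add i1 i2]
end

section
/- Let Δ > 0, D_y > 0 and x > 0. Then ∫₀^{D_y/2} 2√(x + y²) · arctan(Δ/√(x + y²)) dy = arctan( Δ/√(x + D_y²/4) ) · [ (D_y/2)·√(x + D_y²/4) + x·ln( D_y/2 + √(x + D_y²/4) ) ] − x·ln(√x)·arctan(Δ/√x) + ∫₀^{D_y/2} Δ y² / (x + y² + Δ²) dy + ∫₀^{D_y/2} Δ x y · ln( y + √(x + y²) ) / ( √(x + y²) · (x + y² + Δ²) ) dy. -/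
open Real

/-- Integration-by-parts decomposition of the auxiliary integral
`I_j(x) = ∫₀^{D_y/2} 2√(x + y²) arctan(Δ/√(x + y²)) dy` into boundary terms and the
integrals `J₁` and `J₂` of the ergodic-rate analysis. -/
theorem Ij_decomposition (Δ Dy x : ℝ) (hΔ : 0 < Δ) (hDy : 0 < Dy) (hx : 0 < x) :
    (∫ y in (0 : ℝ)..(Dy / 2), 2 * Real.sqrt (x + y ^ 2) *
        Real.arctan (Δ / Real.sqrt (x + y ^ 2)))
      = Real.arctan (Δ / Real.sqrt (x + Dy ^ 2 / 4)) *
          (Dy / 2 * Real.sqrt (x + Dy ^ 2 / 4)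
            + x * Real.log (Dy / 2 + Real.sqrt (x + Dy ^ 2 / 4)))
        - x * Real.log (Real.sqrt x) * Real.arctan (Δ / Real.sqrt x)
        + (∫ y in (0 : ℝ)..(Dy / 2), Δ * y ^ 2 / (x + y ^ 2 + Δ ^ 2))
        + (∫ y in (0 : ℝ)..(Dy / 2),
            Δ * x * y * Real.log (y + Real.sqrt (x + y ^ 2)) /
              (Real.sqrt (x + y ^ 2) * (x + y ^ 2 + Δ ^ 2))) := by
  have hsx : ∀ y : ℝ, (0:ℝ) < x + y ^ 2 := fun y => by positivity
  set s : ℝ → ℝ := fun y => Real.sqrt (x + y ^ 2) with hs_def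
  have hspos : ∀ y, 0 < s y := fun y => Real.sqrt_pos.2 (hsx y)
  have hs_sq : ∀ y, s y ^ 2 = x + y ^ 2 := fun y => Real.sq_sqrt (hsx y).le
  have hys : ∀ y : ℝ, 0 < y + s y := by
    intro y
    have h1 : |y| < s y := by
      have h2 : |y| = Real.sqrt (y ^ 2) := (Real.sqrt_sq_eq_abs y).symm
      rw [h2]
      exact Real.sqrt_lt_sqrt (by positivity) (by linarith)
    have := neg_abs_le y
    linarith
  have hds : ∀ y, HasDerivAt s (y / s y) y := by
    intro y
    have h1 : HasDerivAt (fun t : ℝ => x + t ^ 2) (2 * y) y := by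
      simpa using ((hasDerivAt_pow 2 y).const_add x)
    have h2 := (Real.hasDerivAt_sqrt (hsx y).ne').comp y h1
    refine h2.congr_deriv ?_
    field_simp [(hspos y).ne']
    ring
  set u : ℝ → ℝ := fun y => Real.arctan (Δ / s y) with hu_def
  set u' : ℝ → ℝ := fun y => -(Δ * y / (s y * (x + y ^ 2 + Δ ^ 2))) with hu'_def
  set v : ℝ → ℝ := fun y => y * s y + x * Real.log (y + s y) with hv_def
  have hdu : ∀ y, HasDerivAt u (u' y) y := by
    intro y
    have h1 : HasDerivAt (fun t => Δ / s t)
        ((0 * s y - Δ * (y / s y)) / (s y) ^ 2) y :=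
      (hasDerivAt_const y Δ).div (hds y) (hspos y).ne'
    have h2 := h1.arctan
    convert h2 using 1
    rw [hu'_def]
    simp only
    rw [← hs_sq y]
    field_simp [(hspos y).ne']
    ring
  have hdv : ∀ y, HasDerivAt v (2 * s y) y := by
    intro y
    have h1 : HasDerivAt (fun t => t * s t) (1 * s y + y * (y / s y)) y :=
      (hasDerivAt_id y).mul (hds y)
    have h2 : HasDerivAt (fun t => t + s t) (1 + y / s y) y :=
      (hasDerivAt_id y).add (hds y)
    have h3 := (h2.log (hys y).ne').const_mul x
    have h4 := h1.add h3
    have heq : 1 * s y + y * (y / s y) + x * ((1 + y / s y) / (y + s y)) = 2 * s y := by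
      have h5 := hs_sq y
      field_simp [(hspos y).ne', (hys y).ne']
      linear_combination (-(y + s y)) * h5
    rw [← heq]
    exact h4
  have hpoly : Continuous (fun t : ℝ => x + t ^ 2) := continuous_const.add (continuous_pow 2)
  have hpoly2 : Continuous (fun t : ℝ => x + t ^ 2 + Δ ^ 2) := hpoly.add continuous_const
  have hscont : Continuous s := Real.continuous_sqrt.comp hpoly
  have hdenpos : ∀ y : ℝ, (0:ℝ) < x + y ^ 2 + Δ ^ 2 := fun y => by positivity
  have hu'cont : Continuous u' := by
    apply Continuous.neg
    exact (continuous_const.mul continuous_id).div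
      (hscont.mul hpoly2)
      (fun y => (mul_pos (hspos y) (hdenpos y)).ne')
  have hvcont : Continuous v :=
    (continuous_id.mul hscont).add
      (continuous_const.mul ((continuous_id.add hscont).log fun y => (hys y).ne'))
  have key := intervalIntegral.integral_mul_deriv_eq_deriv_mul
    (a := (0:ℝ)) (b := Dy / 2)
    (fun y _ => hdu y) (fun y _ => hdv y)
    (hu'cont.intervalIntegrable 0 (Dy / 2))
    ((continuous_const.mul hscont).intervalIntegrable 0 (Dy / 2))
  have hlhs : (∫ y in (0:ℝ)..(Dy / 2), 2 * Real.sqrt (x + y ^ 2) *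
      Real.arctan (Δ / Real.sqrt (x + y ^ 2))) = ∫ y in (0:ℝ)..(Dy / 2), u y * (2 * s y) := by
    apply intervalIntegral.integral_congr
    intro y _
    simp only [hu_def, hs_def]
    ring
  have hJ1int : IntervalIntegrable (fun y : ℝ => Δ * y ^ 2 / (x + y ^ 2 + Δ ^ 2))
      MeasureTheory.volume 0 (Dy / 2) := by
    apply Continuous.intervalIntegrable
    exact (continuous_const.mul (continuous_pow 2)).div hpoly2
      (fun y => (hdenpos y).ne')
  have hJ2int : IntervalIntegrable (fun y : ℝ =>
      Δ * x * y * Real.log (y + Real.sqrt (x + y ^ 2)) /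
        (Real.sqrt (x + y ^ 2) * (x + y ^ 2 + Δ ^ 2))) MeasureTheory.volume 0 (Dy / 2) := by
    apply Continuous.intervalIntegrable
    exact ((continuous_const.mul continuous_id).mul
        ((continuous_id.add hscont).log fun y => (hys y).ne')).div
      (hscont.mul hpoly2)
      (fun y => (mul_pos (hspos y) (hdenpos y)).ne')
  have hsplit : (∫ y in (0:ℝ)..(Dy / 2), Δ * y ^ 2 / (x + y ^ 2 + Δ ^ 2))
      + (∫ y in (0:ℝ)..(Dy / 2),
          Δ * x * y * Real.log (y + Real.sqrt (x + y ^ 2)) /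
            (Real.sqrt (x + y ^ 2) * (x + y ^ 2 + Δ ^ 2)))
      = ∫ y in (0:ℝ)..(Dy / 2), -(u' y * v y) := by
    rw [← intervalIntegral.integral_add hJ1int hJ2int]
    apply intervalIntegral.integral_congr
    intro y _
    simp only [hu'_def, hv_def]
    rw [← hs_sq y]
    have h5 := (hspos y).ne'
    field_simp
    rw [Real.sqrt_sq (hspos y).le]
  have hb : u (Dy / 2) * v (Dy / 2)
      = Real.arctan (Δ / Real.sqrt (x + Dy ^ 2 / 4)) *
          (Dy / 2 * Real.sqrt (x + Dy ^ 2 / 4)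
            + x * Real.log (Dy / 2 + Real.sqrt (x + Dy ^ 2 / 4))) := by
    simp only [hu_def, hv_def, hs_def]
    norm_num
    rw [show x + (Dy / 2) ^ 2 = x + Dy ^ 2 / 4 by ring]
  have ha : u 0 * v 0 = x * Real.log (Real.sqrt x) * Real.arctan (Δ / Real.sqrt x) := by
    simp only [hu_def, hv_def, hs_def]
    norm_num
    ring
  rw [intervalIntegral.integral_neg] at hsplit
  rw [hlhs, key, hb, ha]
  linarith [hsplit]
end

section
/- Let Δ > 0, D_y > 0 and x > 0, and set A = arsinh(D_y/(2√x)). Then ∫₀^{D_y/2} Δ x y · ln( y + √(x + y²) ) / ( √(x + y²) · (x + y² + Δ²) ) dy = x · [ ( ln(√x) + A ) · arctan( √(x + D_y²/4)/Δ ) − ln(√x) · arctan(√x/Δ) − ∫₀^{A} arctan( (√x/Δ) · cosh(u) ) du ]. -/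
open Real

lemma sqrt_xy_pos {x : ℝ} (hx : 0 < x) (y : ℝ) : 0 < Real.sqrt (x + y ^ 2) :=
  Real.sqrt_pos.mpr (by positivity)

lemma sqrt_xy_eq {x : ℝ} (hx : 0 < x) (y : ℝ) :
    Real.sqrt x * Real.sqrt (1 + (y / Real.sqrt x) ^ 2) = Real.sqrt (x + y ^ 2) := by
  have hsx : (Real.sqrt x) ^ 2 = x := Real.sq_sqrt hx.le
  have h1 : (y / Real.sqrt x) ^ 2 = y ^ 2 / x := by
    rw [div_pow, hsx]
  rw [h1, ← Real.sqrt_mul hx.le]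
  congr 1
  field_simp

lemma log_arg_eq {x : ℝ} (hx : 0 < x) (y : ℝ) :
    Real.log (y + Real.sqrt (x + y ^ 2)) =
      Real.log (Real.sqrt x) + Real.arsinh (y / Real.sqrt x) := by
  have hsx : 0 < Real.sqrt x := Real.sqrt_pos.mpr hx
  have harsinh : Real.arsinh (y / Real.sqrt x)
      = Real.log (y / Real.sqrt x + Real.sqrt (1 + (y / Real.sqrt x) ^ 2)) := rfl
  have hpos : 0 < y / Real.sqrt x + Real.sqrt (1 + (y / Real.sqrt x) ^ 2) := by
    rcases le_or_gt 0 y with hy | hy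
    · positivity
    · have : |y / Real.sqrt x| < Real.sqrt (1 + (y / Real.sqrt x) ^ 2) := by
        rw [← Real.sqrt_sq_eq_abs]
        exact Real.sqrt_lt_sqrt (by positivity) (by linarith)
      have := neg_lt_of_abs_lt this
      linarith
  rw [harsinh, ← Real.log_mul hsx.ne' hpos.ne']
  congr 1
  rw [mul_add, mul_div_cancel₀ _ hsx.ne', sqrt_xy_eq hx y, add_comm]

lemma cosh_arsinh_eq {x : ℝ} (hx : 0 < x) (y : ℝ) :
    Real.cosh (Real.arsinh (y / Real.sqrt x)) = Real.sqrt (x + y ^ 2) / Real.sqrt x := by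
  have hsx : 0 < Real.sqrt x := Real.sqrt_pos.mpr hx
  rw [Real.cosh_arsinh, eq_div_iff hsx.ne', mul_comm, sqrt_xy_eq hx y]

/-- Reduction of the auxiliary integral `J₂` of the ergodic-rate analysis to a single
integral of `arctan` of a hyperbolic cosine, with `A = arsinh(D_y/(2√x))`. -/
theorem J2_closed_reduction (Δ Dy x : ℝ) (hΔ : 0 < Δ) (hDy : 0 < Dy) (hx : 0 < x) :
    (∫ y in (0 : ℝ)..(Dy / 2),
        Δ * x * y * Real.log (y + Real.sqrt (x + y ^ 2)) /
          (Real.sqrt (x + y ^ 2) * (x + y ^ 2 + Δ ^ 2)))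
      = x * ((Real.log (Real.sqrt x) + Real.arsinh (Dy / (2 * Real.sqrt x))) *
              Real.arctan (Real.sqrt (x + Dy ^ 2 / 4) / Δ)
            - Real.log (Real.sqrt x) * Real.arctan (Real.sqrt x / Δ)
            - ∫ u in (0 : ℝ)..(Real.arsinh (Dy / (2 * Real.sqrt x))),
                Real.arctan (Real.sqrt x / Δ * Real.cosh u)) := by
  have hsx : 0 < Real.sqrt x := Real.sqrt_pos.mpr hx
  set f : ℝ → ℝ := fun u => Real.arctan (Real.sqrt x / Δ * Real.cosh u) with hf_def
  have hf_cont : Continuous f := by continuity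
  set H : ℝ → ℝ := fun y =>
    x * ((Real.log (Real.sqrt x) + Real.arsinh (y / Real.sqrt x)) *
          Real.arctan (Real.sqrt (x + y ^ 2) / Δ)
        - ∫ u in (0 : ℝ)..(Real.arsinh (y / Real.sqrt x)), f u) with hH_def
  set g : ℝ → ℝ := fun y =>
    Δ * x * y * Real.log (y + Real.sqrt (x + y ^ 2)) /
      (Real.sqrt (x + y ^ 2) * (x + y ^ 2 + Δ ^ 2)) with hg_def
  have hderiv : ∀ y ∈ Set.uIcc (0 : ℝ) (Dy / 2), HasDerivAt H (g y) y := by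
    intro y _
    have hS : 0 < Real.sqrt (x + y ^ 2) := sqrt_xy_pos hx y
    -- derivative of arsinh (y / √x)
    have h1 : HasDerivAt (fun y : ℝ => Real.arsinh (y / Real.sqrt x))
        (1 / Real.sqrt (x + y ^ 2)) y := by
      have := (Real.hasDerivAt_arsinh (y / Real.sqrt x)).comp y
        ((hasDerivAt_id y).div_const (Real.sqrt x))
      convert this using 1
      · rfl
      · rfl
      · rfl
      have h2 : Real.sqrt (1 + (y / Real.sqrt x) ^ 2)
          = Real.sqrt (x + y ^ 2) / Real.sqrt x := by
        rw [eq_div_iff hsx.ne', mul_comm, sqrt_xy_eq hx y]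
      rw [h2]
      field_simp
    -- derivative of √(x + y²)
    have h2 : HasDerivAt (fun y : ℝ => Real.sqrt (x + y ^ 2))
        (y / Real.sqrt (x + y ^ 2)) y := by
      have := (((hasDerivAt_pow 2 y).const_add x)).sqrt (by positivity)
      convert this using 1
      push_cast
      ring
    -- derivative of arctan (√(x + y²) / Δ)
    have h3 : HasDerivAt (fun y : ℝ => Real.arctan (Real.sqrt (x + y ^ 2) / Δ))
        (Δ * y / (Real.sqrt (x + y ^ 2) * (x + y ^ 2 + Δ ^ 2))) y := by
      have := (Real.hasDerivAt_arctan (Real.sqrt (x + y ^ 2) / Δ)).comp y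
        (h2.div_const Δ)
      convert this using 1
      · rfl
      · rfl
      · rfl
      have hsq : (Real.sqrt (x + y ^ 2)) ^ 2 = x + y ^ 2 := Real.sq_sqrt (by positivity)
      rw [div_pow, hsq]
      field_simp
      ring
    -- derivative of the integral term
    have h4 : HasDerivAt (fun y : ℝ => ∫ u in (0 : ℝ)..(Real.arsinh (y / Real.sqrt x)), f u)
        (Real.arctan (Real.sqrt (x + y ^ 2) / Δ) * (1 / Real.sqrt (x + y ^ 2))) y := by
      have hF : HasDerivAt (fun t : ℝ => ∫ u in (0 : ℝ)..t, f u)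
          (f (Real.arsinh (y / Real.sqrt x))) (Real.arsinh (y / Real.sqrt x)) :=
        intervalIntegral.integral_hasDerivAt_right
          (hf_cont.intervalIntegrable _ _)
          (hf_cont.stronglyMeasurableAtFilter _ _) hf_cont.continuousAt
      have := hF.comp y h1
      convert this using 1
      · rfl
      · rfl
      · rfl
      rw [hf_def]
      simp only [cosh_arsinh_eq hx y]
      rw [div_mul_div_comm, mul_comm (Real.sqrt x) _, mul_comm Δ _,
        ← div_div, mul_div_assoc, div_self hsx.ne', mul_one]
    have hmain := (((h1.const_add (Real.log (Real.sqrt x))).mul h3).sub h4).const_mul x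
    convert hmain using 1
    · rfl
    · rfl
    · rfl
    simp only [hg_def, log_arg_eq hx y]
    field_simp
    ring
  have hcont : ContinuousOn g (Set.uIcc (0 : ℝ) (Dy / 2)) := by
    have : ∀ y : ℝ, ContinuousAt g y := by
      intro y
      have hS : 0 < Real.sqrt (x + y ^ 2) := sqrt_xy_pos hx y
      have habs : |y| < Real.sqrt (x + y ^ 2) := by
        rw [← Real.sqrt_sq_eq_abs]
        exact Real.sqrt_lt_sqrt (by positivity) (by linarith)
      have hy := neg_lt_of_abs_lt habs
      have hpos : 0 < y + Real.sqrt (x + y ^ 2) := by linarith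
      rw [hg_def]
      apply ContinuousAt.div
      · have hc : ContinuousAt (fun z : ℝ => z + Real.sqrt (x + z ^ 2)) y := by fun_prop
        exact ContinuousAt.mul (by fun_prop) (hc.log hpos.ne')
      · fun_prop
      · positivity
    exact (continuous_iff_continuousAt.mpr this).continuousOn
  have hint : IntervalIntegrable g MeasureTheory.volume 0 (Dy / 2) :=
    hcont.intervalIntegrable
  have key := intervalIntegral.integral_eq_sub_of_hasDerivAt hderiv hint
  rw [hg_def] at key
  rw [key, hH_def]
  have e1 : (Dy / 2) / Real.sqrt x = Dy / (2 * Real.sqrt x) := by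
    rw [div_div]
  have e2 : x + (Dy / 2) ^ 2 = x + Dy ^ 2 / 4 := by ring
  simp only [e1, e2]
  simp [Real.sqrt_eq_zero', hx.le]
  ring
end

section
/- Let α > 0, δ > 0, h ≥ 0, x_k ∈ ℝ, C > 0, and let (x, y) ∈ ℝ² be such that (x − x_k)² + y² + h² > 0 and (x − x_k − δ)² + y² + h² > 0. Then C e^{−α x_k} / ((x − x_k)² + y² + h²) = C e^{−α (x_k + δ)} / ((x − x_k − δ)² + y² + h²) holds if and only if ( x − x_k − e^{αδ} δ/(e^{αδ} − 1) )² + y² = e^{αδ} δ² / (e^{αδ} − 1)² − h². -/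
open Real

/-- The boundary between the serving regions of two adjacent pinching antennas at
horizontal positions `x_k` and `x_k + δ` (waveguide height `h`, attenuation `α`):
the two SNRs coincide iff the user lies on the circle
`(x − x_k − e^{αδ}δ/(e^{αδ} − 1))² + y² = e^{αδ}δ²/(e^{αδ} − 1)² − h²`. -/
theorem serving_region_boundary_circle (α δ h xk C x y : ℝ)
    (hα : 0 < α) (hδ : 0 < δ) (hh : 0 ≤ h) (hC : 0 < C)
    (h1 : 0 < (x - xk) ^ 2 + y ^ 2 + h ^ 2)
    (h2 : 0 < (x - xk - δ) ^ 2 + y ^ 2 + h ^ 2) :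
    C * Real.exp (-α * xk) / ((x - xk) ^ 2 + y ^ 2 + h ^ 2)
        = C * Real.exp (-α * (xk + δ)) / ((x - xk - δ) ^ 2 + y ^ 2 + h ^ 2)
      ↔ (x - xk - Real.exp (α * δ) * δ / (Real.exp (α * δ) - 1)) ^ 2 + y ^ 2
          = Real.exp (α * δ) * δ ^ 2 / (Real.exp (α * δ) - 1) ^ 2 - h ^ 2 := by
  set E := Real.exp (α * δ) with hEdef
  have hEpos : 0 < E := Real.exp_pos _
  have hE1 : 1 < E := by
    have := Real.add_one_lt_exp (ne_of_gt (mul_pos hα hδ))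
    nlinarith [mul_pos hα hδ]
  have hEm1 : E - 1 ≠ 0 := by linarith
  have key : Real.exp (-α * (xk + δ)) * E = Real.exp (-α * xk) := by
    rw [hEdef, ← Real.exp_add]
    ring_nf
  have hc : C * Real.exp (-α * xk) ≠ 0 := by positivity
  have expand : (x - xk - E * δ / (E - 1)) ^ 2 + y ^ 2
      - (E * δ ^ 2 / (E - 1) ^ 2 - h ^ 2)
      = (-(1 / (E - 1))) * (((x - xk) ^ 2 + y ^ 2 + h ^ 2)
        - E * ((x - xk - δ) ^ 2 + y ^ 2 + h ^ 2)) := by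
    field_simp
    ring
  rw [div_eq_div_iff (ne_of_gt h1) (ne_of_gt h2)]
  constructor
  · intro hEq
    have hA : (x - xk) ^ 2 + y ^ 2 + h ^ 2
        = E * ((x - xk - δ) ^ 2 + y ^ 2 + h ^ 2) := by
      apply mul_left_cancel₀ hc
      linear_combination (-E) * hEq - (C * ((x - xk) ^ 2 + y ^ 2 + h ^ 2)) * key
    have : (x - xk - E * δ / (E - 1)) ^ 2 + y ^ 2
        - (E * δ ^ 2 / (E - 1) ^ 2 - h ^ 2) = 0 := by
      rw [expand, hA]; ring
    linarith
  · intro hCirc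
    have hA : (x - xk) ^ 2 + y ^ 2 + h ^ 2
        = E * ((x - xk - δ) ^ 2 + y ^ 2 + h ^ 2) := by
      have h0 : (x - xk - E * δ / (E - 1)) ^ 2 + y ^ 2
          - (E * δ ^ 2 / (E - 1) ^ 2 - h ^ 2) = 0 := by linarith
      rw [expand] at h0
      have h1' : 1 / (E - 1) ≠ 0 := one_div_ne_zero hEm1
      have := mul_eq_zero.mp h0
      rcases this with h' | h'
      · exact absurd h' (by simpa using h1')
      · linarith
    linear_combination (-(C * Real.exp (-α * (xk + δ)))) * hA
      - (C * ((x - xk - δ) ^ 2 + y ^ 2 + h ^ 2)) * key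
end
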